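/- Let $h:\mathbb{R}^{m\times n}\to\mathbb{R}$ (with $m\le n$) be $\mu$-strongly convex with $L$-Lipschitz gradient, $L\ge\mu>0$, $\lambda>0$. Let $X_1,X_2\in\mathbb{R}^{m\times n}$ be pseudo-stationary points of $f(X)=h(X)+\lambda\|X\|_*$, with simultaneous decompositions $X_i = R_i[\Sigma_i\;0]P_i^\top$ and $-\nabla h(X_i) = R_i[D_i\;0]P_i^\top$ where $\Sigma_i = \mathrm{Diag}(\sigma(X_i))$ and $D_i = \mathrm{Diag}(d^i)$ with $d^i\ge 0$ and $d^i_1=\cdots=d^i_{\mathrm{rank}(X_i)}=\lambda$ ($i=1,2$). Then there exists a permutation $\tau$ of $[m]$ such that $\sum_{i=1}^m (L\sigma_i(X_1)+d^1_i)(\mu\sigma_{\tau(i)}(X_2)+d^2_{\tau(i)}) + \sum_{i=1}^m (\mu\sigma_i(X_1)+d^1_i)(L\sigma_{\tau(i)}(X_2)+d^2_{\tau(i)}) - \sum_{i=1}^m (\mu\sigma_i(X_1)+d^1_i)(L\sigma_i(X_1)+d^1_i) - \sum_{i=1}^m (\mu\sigma_i(X_2)+d^2_i)(L\sigma_i(X_2)+d^2_i)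 \geq 0$. -/

import Mathlib

/-!
Put `Aᵢ = μ Xᵢ - ∇h(Xᵢ)` and `Bᵢ = L Xᵢ - ∇h(Xᵢ)`. The function `k = h - μ/2 ‖·‖²` is convex and
its gradient satisfies `⟪∇k x - ∇k y, x - y⟫ ≤ (L - μ) ‖x - y‖²`, which yields the descent lemma
for `k`; convexity and the descent lemma together make `∇k` cocoercive,
`‖∇k x - ∇k y‖² ≤ (L - μ) ⟪∇k x - ∇k y, x - y⟫`, and this is the coercivity inequality
`⟪A₁ - A₂, B₁ - B₂⟫ ≤ 0`. The simultaneous decompositions give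
`Aᵢ = Rᵢ [Diag(μ σ(Xᵢ) + dⁱ) 0] Pᵢᵀ` and `Bᵢ = Rᵢ [Diag(L σ(Xᵢ) + dⁱ) 0] Pᵢᵀ`, so `⟪A₁, B₁⟫` and
`⟪A₂, B₂⟫` are the two subtracted sums, while the cross terms add up to `∑ᵢⱼ wᵢⱼ Qᵢⱼ Sᵢⱼ` with
nonnegative weights `wᵢⱼ`, `Q = R₁ᵀ R₂` and `S` the leading `m × m` block of `P₁ᵀ P₂`. Since
`|Qᵢⱼ Sᵢⱼ| ≤ (Qᵢⱼ² + Sᵢⱼ²) / 2`, the matrix `(|Qᵢⱼ Sᵢⱼ|)` is doubly substochastic, hence below a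
doubly stochastic matrix, and by Birkhoff's theorem the linear form `M ↦ ∑ᵢⱼ wᵢⱼ Mᵢⱼ` attains its
maximum over those at a permutation matrix `τ`.
-/

open Matrix Finset

attribute [local instance] Matrix.frobeniusNormedAddCommGroup Matrix.frobeniusNormedSpace

def mdot {m n : ℕ} (A B : Matrix (Fin m) (Fin n) ℝ) : ℝ := ∑ i, ∑ j, A i j * B i j

noncomputable def frob {m n : ℕ} (A : Matrix (Fin m) (Fin n) ℝ) : ℝ := Real.sqrt (mdot A A)

def IsOrth {k : ℕ} (R : Matrix (Fin k) (Fin k) ℝ) : Prop := Rᵀ * R = 1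

def rdg (a b : ℕ) {c : ℕ} (x : Fin c → ℝ) : Matrix (Fin a) (Fin b) ℝ :=
  Matrix.of fun i j => if h : (i : ℕ) = (j : ℕ) ∧ (i : ℕ) < c then x ⟨i, h.2⟩ else 0

noncomputable def descSort {k : ℕ} (f : Fin k → ℝ) : Fin k → ℝ := fun i => f (Tuple.sort f i.rev)

noncomputable def sigCol {a r : ℕ} (X : Matrix (Fin a) (Fin r) ℝ) : Fin r → ℝ :=
  descSort fun i => Real.sqrt (((Matrix.isHermitian_conjTranspose_mul_self X : (Xᵀ * X).IsHermitian)).eigenvalues i)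

noncomputable def sigRow {a b : ℕ} (X : Matrix (Fin a) (Fin b) ℝ) : Fin a → ℝ :=
  descSort fun i => Real.sqrt ((Matrix.isHermitian_mul_conjTranspose_self X).eigenvalues i)

noncomputable def toDual {m n : ℕ} (G : Matrix (Fin m) (Fin n) ℝ) :
    Matrix (Fin m) (Fin n) ℝ →L[ℝ] ℝ :=
  LinearMap.toContinuousLinearMap
    { toFun := fun Y => mdot G Y
      map_add' := fun Y Z => by
        simp [mdot, Matrix.add_apply, mul_add, Finset.sum_add_distrib]
      map_smul' := fun c Y => by
        simp [mdot, Matrix.smul_apply, smul_eq_mul, Finset.mul_sum, mul_left_comm] }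

noncomputable def enorm2 {k : ℕ} (v : Fin k → ℝ) : ℝ := Real.sqrt (∑ i, v i ^ 2)

def subdiff {m n : ℕ} (f : Matrix (Fin m) (Fin n) ℝ → ℝ) (X : Matrix (Fin m) (Fin n) ℝ) :
    Set (Matrix (Fin m) (Fin n) ℝ) := {G | ∀ Y, f X + mdot G (Y - X) ≤ f Y}

open scoped RealInnerProductSpace

theorem le_mul_of_forall_two_mul_sub_mul_sq_mul_le {a b c : ℝ} (hc : 0 ≤ c)
    (h : ∀ t, (2 * t - c * t ^ 2) * a ≤ b) : a ≤ c * b := by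
  rcases hc.eq_or_lt with rfl | hc
  · by_contra! ha
    rw [zero_mul] at ha
    have := h ((b + 1) / (2 * a))
    rw [zero_mul, sub_zero, show 2 * ((b + 1) / (2 * a)) * a = b + 1 by field_simp] at this
    linarith
  · have := h c⁻¹
    field_simp at this
    nlinarith

section InnerProductSpace

variable {E : Type*} [NormedAddCommGroup E] [InnerProductSpace ℝ E]

theorem norm_sub_sq_le_mul_inner_sub {k : E → ℝ} {d : E → E} {c : ℝ} (hc : 0 ≤ c)
    (hlow : ∀ x y, k x + ⟪d x, y - x⟫ ≤ k y)
    (hup : ∀ x y, k y ≤ k x + ⟪d x, y - x⟫ + c / 2 * ‖y - x‖ ^ 2) (x y : E) :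
    ‖d x - d y‖ ^ 2 ≤ c * ⟪d x - d y, x - y⟫ := by
  -- compare `k` at `x - t • (d x - d y)` through the upper bound at `x` and the lower one at `y`
  have key : ∀ x y t, k y + ⟪d y, x - y⟫ + (t - c / 2 * t ^ 2) * ‖d x - d y‖ ^ 2 ≤ k x := by
    intro x y t
    have h1 := hup x (x - t • (d x - d y))
    have h2 := hlow y (x - t • (d x - d y))
    rw [sub_sub_cancel_left, norm_neg, norm_smul, Real.norm_eq_abs, mul_pow, sq_abs,
      inner_neg_right, inner_smul_right] at h1
    rw [sub_right_comm, inner_sub_right, inner_smul_right] at h2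
    have h3 : ⟪d x, d x - d y⟫ - ⟪d y, d x - d y⟫ = ‖d x - d y‖ ^ 2 := by
      rw [← inner_sub_left, real_inner_self_eq_norm_sq]
    linear_combination h1 + h2 - t * h3
  refine le_mul_of_forall_two_mul_sub_mul_sq_mul_le hc fun t => ?_
  have h1 := key x y t
  have h2 := key y x t
  rw [norm_sub_rev] at h2
  have h3 : ⟪d x - d y, x - y⟫ = -⟪d y, x - y⟫ - ⟪d x, y - x⟫ := by
    rw [inner_sub_left, ← neg_sub x y, inner_neg_right]; ring
  nlinarith

variable [CompleteSpace E]

theorem HasGradientAt.hasDerivAt_comp_add_smul {f : E → ℝ} {f' x v : E} {t : ℝ}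
    (hf : HasGradientAt f f' (x + t • v)) :
    HasDerivAt (fun s : ℝ => f (x + s • v)) ⟪f', v⟫ t := by
  have hline : HasDerivAt (fun s : ℝ => x + s • v) v t := by
    simpa using ((hasDerivAt_id t).smul_const v).const_add x
  have := hf.hasFDerivAt.comp_hasDerivAt t hline
  rwa [InnerProductSpace.toDual_apply_apply] at this

theorem ConvexOn.inner_gradient_le_sub {s : Set E} {f : E → ℝ} {f' x y : E}
    (hf : ConvexOn ℝ s f) (hx : x ∈ s) (hy : y ∈ s) (hf' : HasGradientAt f f' x) :
    ⟪f', y - x⟫ ≤ f y - f x := by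
  have hline : ConvexOn ℝ (AffineMap.lineMap x y ⁻¹' s) fun t : ℝ => f (x + t • (y - x)) := by
    have hcomp : (fun t : ℝ => f (x + t • (y - x))) = f ∘ AffineMap.lineMap x y := by
      funext t
      simp only [Function.comp_apply, AffineMap.lineMap_apply_module', add_comm]
    exact hcomp ▸ hf.comp_affineMap (AffineMap.lineMap x y)
  have hd : HasDerivAt (fun t : ℝ => f (x + t • (y - x))) ⟪f', y - x⟫ 0 :=
    HasGradientAt.hasDerivAt_comp_add_smul (by simpa using hf')
  simpa [slope_def_field] using hline.le_slope_of_hasDerivAt (by simpa) (by simpa) one_pos hd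

theorem le_add_inner_add_sq_of_inner_gradient_sub_le {k : E → ℝ} {d : E → E} {c : ℝ}
    (hk : ∀ x, HasGradientAt k (d x) x) (hd : ∀ x y, ⟪d x - d y, x - y⟫ ≤ c * ‖x - y‖ ^ 2)
    (x y : E) : k y ≤ k x + ⟪d x, y - x⟫ + c / 2 * ‖y - x‖ ^ 2 := by
  set v := y - x
  let χ : ℝ → ℝ := fun t => k (x + t • v) - t * ⟪d x, v⟫ - c / 2 * t ^ 2 * ‖v‖ ^ 2
  have hχ : ∀ t, HasDerivAt χ (⟪d (x + t • v), v⟫ - ⟪d x, v⟫ - c * t * ‖v‖ ^ 2) t := fun t => by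
    have hquad : HasDerivAt (fun s : ℝ => c / 2 * s ^ 2 * ‖v‖ ^ 2) (c * t * ‖v‖ ^ 2) t :=
      (((hasDerivAt_pow 2 t).const_mul (c / 2)).mul_const _).congr_deriv (by push_cast; ring)
    exact (((hk _).hasDerivAt_comp_add_smul).sub ((hasDerivAt_id' t).mul_const _)).sub hquad
      |>.congr_deriv (by ring)
  have hχ_nonpos : ∀ t ∈ interior (Set.Icc (0 : ℝ) 1),
      ⟪d (x + t • v), v⟫ - ⟪d x, v⟫ - c * t * ‖v‖ ^ 2 ≤ 0 := by
    intro t ht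
    rw [interior_Icc] at ht
    have := hd (x + t • v) x
    rw [add_sub_cancel_left, inner_smul_right, norm_smul, Real.norm_of_nonneg ht.1.le,
      inner_sub_left] at this
    nlinarith [ht.1]
  have hanti : AntitoneOn χ (Set.Icc 0 1) :=
    antitoneOn_of_hasDerivWithinAt_nonpos (convex_Icc 0 1)
      (fun t _ => (hχ t).continuousAt.continuousWithinAt)
      (fun t _ => (hχ t).hasDerivWithinAt) hχ_nonpos
  have := hanti (by simp) (by simp) zero_le_one
  simp only [χ, v, one_smul, add_sub_cancel, zero_smul, add_zero, one_mul, one_pow, mul_one,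
    zero_mul, sub_zero, ne_eq, OfNat.ofNat_ne_zero, not_false_eq_true, zero_pow, mul_zero] at this
  linarith

theorem inner_gradient_coercivity {f : E → ℝ} {g : E → E} {μ L : ℝ} (hμL : μ ≤ L)
    (hf : ∀ x, HasGradientAt f (g x) x)
    (hconv : ConvexOn ℝ Set.univ fun x => f x - μ / 2 * ‖x‖ ^ 2)
    (hlip : ∀ x y, ‖g x - g y‖ ≤ L * ‖x - y‖) (x y : E) :
    ⟪μ • (x - y) - (g x - g y), L • (x - y) - (g x - g y)⟫ ≤ 0 := by
  set k := fun x => f x - μ / 2 * ‖x‖ ^ 2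
  set d := fun x => g x - μ • x
  have hdiff : ∀ x y, d x - d y = (g x - g y) - μ • (x - y) := fun x y => by
    simp only [d]
    module
  have hk : ∀ x, HasGradientAt k (d x) x := fun x => by
    refine ((hf x).hasFDerivAt.sub
      ((hasStrictFDerivAt_norm_sq x).hasFDerivAt.const_mul (μ / 2))).congr_fderiv ?_
    ext v
    simp only [_root_.sub_apply, _root_.smul_apply,
      InnerProductSpace.toDual_apply_apply, coe_innerSL_apply, nsmul_eq_mul, smul_eq_mul, d,
      inner_sub_left, real_inner_smul_left]
    ring
  have hlow : ∀ x y, k x + ⟪d x, y - x⟫ ≤ k y := fun x y => by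
    linarith [hconv.inner_gradient_le_sub (Set.mem_univ x) (Set.mem_univ y) (hk x)]
  have hmono : ∀ x y, ⟪d x - d y, x - y⟫ ≤ (L - μ) * ‖x - y‖ ^ 2 := fun x y => by
    rw [hdiff, inner_sub_left, real_inner_smul_left, real_inner_self_eq_norm_sq]
    nlinarith [real_inner_le_norm (g x - g y) (x - y), hlip x y, norm_nonneg (x - y)]
  have hcoco := norm_sub_sq_le_mul_inner_sub (sub_nonneg.2 hμL) hlow
    (le_add_inner_add_sq_of_inner_gradient_sub_le hk hmono) x y
  -- the left side equals `‖d x - d y‖ ^ 2 - (L - μ) * ⟪d x - d y, x - y⟫`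
  have hμ : μ • (x - y) - (g x - g y) = -(d x - d y) := by
    rw [hdiff]
    module
  have hL : L • (x - y) - (g x - g y) = -(d x - d y) + (L - μ) • (x - y) := by
    rw [hdiff]
    module
  rw [hμ, hL, inner_add_right, inner_neg_neg, inner_neg_left, real_inner_smul_right,
    real_inner_self_eq_norm_sq]
  linarith

end InnerProductSpace

def flatten (m n : ℕ) : Matrix (Fin m) (Fin n) ℝ ≃ₗ[ℝ] EuclideanSpace ℝ (Fin m × Fin n) where
  toFun A := WithLp.toLp 2 fun p => A p.1 p.2
  invFun v := Matrix.of fun i j => v (i, j)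
  map_add' _ _ := rfl
  map_smul' _ _ := rfl
  left_inv _ := rfl
  right_inv _ := rfl

@[simp]
theorem flatten_apply {m n : ℕ} (A : Matrix (Fin m) (Fin n) ℝ) (p : Fin m × Fin n) :
    flatten m n A p = A p.1 p.2 := rfl

theorem inner_flatten {m n : ℕ} (A B : Matrix (Fin m) (Fin n) ℝ) :
    ⟪flatten m n A, flatten m n B⟫ = mdot A B := by
  simp [mdot, PiLp.inner_apply, Fintype.sum_prod_type, mul_comm]

theorem mdot_flatten_symm {m n : ℕ} (A : Matrix (Fin m) (Fin n) ℝ)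
    (v : EuclideanSpace ℝ (Fin m × Fin n)) :
    mdot A ((flatten m n).symm v) = ⟪flatten m n A, v⟫ := by
  rw [← inner_flatten, LinearEquiv.apply_symm_apply]

theorem norm_flatten {m n : ℕ} (A : Matrix (Fin m) (Fin n) ℝ) : ‖flatten m n A‖ = frob A := by
  rw [norm_eq_sqrt_real_inner, inner_flatten, frob]

theorem mdot_gradient_coercivity {m n : ℕ} {mu L : ℝ} (hL : mu ≤ L)
    {h : Matrix (Fin m) (Fin n) ℝ → ℝ} {G : Matrix (Fin m) (Fin n) ℝ → Matrix (Fin m) (Fin n) ℝ}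
    (hgrad : ∀ X, HasFDerivAt h (toDual (G X)) X)
    (hsc : ConvexOn ℝ Set.univ fun X => h X - mu / 2 * mdot X X)
    (hlip : ∀ X Y, frob (G X - G Y) ≤ L * frob (X - Y)) (X Y : Matrix (Fin m) (Fin n) ℝ) :
    mdot (mu • (X - Y) - (G X - G Y)) (L • (X - Y) - (G X - G Y)) ≤ 0 := by
  set e := flatten m n
  have hgrad' : ∀ v, HasGradientAt (h ∘ e.symm) (e (G (e.symm v))) v := fun v => by
    refine ((hgrad (e.symm v)).comp v e.symm.toContinuousLinearEquiv.hasFDerivAt).congr_fderiv ?_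
    ext w
    exact mdot_flatten_symm _ _
  have hsc' : ConvexOn ℝ Set.univ fun v => (h ∘ e.symm) v - mu / 2 * ‖v‖ ^ 2 := by
    have hnorm : ∀ v, mdot (e.symm v) (e.symm v) = ‖v‖ ^ 2 := fun v => by
      rw [mdot_flatten_symm, LinearEquiv.apply_symm_apply, real_inner_self_eq_norm_sq]
    simpa [Function.comp_def, hnorm] using hsc.comp_linearMap e.symm.toLinearMap
  have hlip' : ∀ v w, ‖(e ∘ G ∘ e.symm) v - (e ∘ G ∘ e.symm) w‖ ≤ L * ‖v - w‖ := fun v w => by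
    simpa [← norm_flatten, e] using hlip (e.symm v) (e.symm w)
  simpa [← inner_flatten, e] using inner_gradient_coercivity hL hgrad' hsc' hlip' (e X) (e Y)

section Substochastic

variable {ι : Type*} [Fintype ι]

structure IsDoublySubstochastic (M : Matrix ι ι ℝ) : Prop where
  nonneg : ∀ i j, 0 ≤ M i j
  sum_row_le : ∀ i, ∑ j, M i j ≤ 1
  sum_col_le : ∀ j, ∑ i, M i j ≤ 1

theorem IsDoublySubstochastic.submatrix {κ : Type*} [Fintype κ] {M : Matrix ι ι ℝ}
    (hM : IsDoublySubstochastic M) (e : κ ↪ ι) : IsDoublySubstochastic (M.submatrix e e) := by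
  have hsub : ∀ f : ι → ℝ, (∀ j, 0 ≤ f j) → ∑ k, f (e k) ≤ ∑ j, f j := fun f hf => by
    rw [← Finset.sum_map _ e]
    exact Finset.sum_le_sum_of_subset_of_nonneg (Finset.subset_univ _) fun j _ _ => hf j
  exact ⟨fun i j => hM.nonneg _ _,
    fun i => (hsub _ (hM.nonneg (e i))).trans (hM.sum_row_le (e i)),
    fun j => (hsub _ (hM.nonneg · (e j))).trans (hM.sum_col_le (e j))⟩

theorem IsDoublySubstochastic.abs_hadamard {Q S : Matrix ι ι ℝ}
    (hQ : IsDoublySubstochastic (Q ⊙ Q)) (hS : IsDoublySubstochastic (S ⊙ S)) : IsDoublySubstochastic ((Q ⊙ S).map abs) := by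
  have hentry : ∀ i j, (Q ⊙ S).map abs i j ≤ ((Q ⊙ Q) i j + (S ⊙ S) i j) / 2 := fun i j => by
    simp only [map_apply, hadamard_apply]
    exact abs_le.2
      ⟨by nlinarith [sq_nonneg (Q i j + S i j)], by nlinarith [sq_nonneg (Q i j - S i j)]⟩
  refine ⟨fun i j => abs_nonneg _, fun i => ?_, fun j => ?_⟩
  · calc ∑ j, (Q ⊙ S).map abs i j ≤ ∑ j, ((Q ⊙ Q) i j + (S ⊙ S) i j) / 2 :=
          Finset.sum_le_sum fun j _ => hentry i j
      _ ≤ 1 := by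
        rw [← Finset.sum_div, Finset.sum_add_distrib]
        linarith [hQ.sum_row_le i, hS.sum_row_le i]
  · calc ∑ i, (Q ⊙ S).map abs i j ≤ ∑ i, ((Q ⊙ Q) i j + (S ⊙ S) i j) / 2 :=
          Finset.sum_le_sum fun i _ => hentry i j
      _ ≤ 1 := by
        rw [← Finset.sum_div, Finset.sum_add_distrib]
        linarith [hQ.sum_col_le j, hS.sum_col_le j]

theorem IsDoublySubstochastic.exists_mem_doublyStochastic_le [DecidableEq ι] {M : Matrix ι ι ℝ}
    (hM : IsDoublySubstochastic M) : ∃ D ∈ doublyStochastic ℝ ι, ∀ i j, M i j ≤ D i j := by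
  -- fill the row and column deficits `r` and `c` by the rank-one matrix `r cᵀ / s`
  -- (if `s = 0` there is no deficit, and `x / 0 = 0` makes this the zero matrix)
  set r : ι → ℝ := fun i => 1 - ∑ j, M i j
  set c : ι → ℝ := fun j => 1 - ∑ i, M i j
  set s := ∑ i, r i
  have hr : ∀ i, 0 ≤ r i := fun i => sub_nonneg.2 (hM.sum_row_le i)
  have hc : ∀ j, 0 ≤ c j := fun j => sub_nonneg.2 (hM.sum_col_le j)
  have hs₀ : 0 ≤ s := Finset.sum_nonneg fun i _ => hr i
  have hsc : ∑ j, c j = s := by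
    simp only [c, r, s, Finset.sum_sub_distrib]
    rw [Finset.sum_comm]
  have hcancel : ∀ {t}, 0 ≤ t → t ≤ s → t * s / s = t := fun ht hts => by
    rcases eq_or_ne s 0 with hs | hs
    · simp [le_antisymm (hs ▸ hts) ht]
    · field_simp
  refine ⟨fun i j => M i j + r i * c j / s, ?_, fun i j => ?_⟩
  · refine mem_doublyStochastic_iff_sum.2 ⟨fun i j => ?_, fun i => ?_, fun j => ?_⟩
    · exact add_nonneg (hM.nonneg i j) (div_nonneg (mul_nonneg (hr i) (hc j)) hs₀)
    · rw [Finset.sum_add_distrib, ← Finset.sum_div, ← Finset.mul_sum, hsc,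
        hcancel (hr i) (Finset.single_le_sum (fun i _ => hr i) (Finset.mem_univ i))]
      ring
    · rw [Finset.sum_add_distrib, ← Finset.sum_div, ← Finset.sum_mul, mul_comm,
        hcancel (hc j) (hsc ▸ Finset.single_le_sum (fun j _ => hc j) (Finset.mem_univ j))]
      ring
  · exact le_add_of_nonneg_right (div_nonneg (mul_nonneg (hr i) (hc j)) hs₀)

theorem exists_perm_sum_mul_le_of_mem_doublyStochastic [DecidableEq ι] (w : Matrix ι ι ℝ)
    {D : Matrix ι ι ℝ} (hD : D ∈ doublyStochastic ℝ ι) :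
    ∃ τ : Equiv.Perm ι, ∑ i, ∑ j, w i j * D i j ≤ ∑ i, w i (τ i) := by
  let φ : Matrix ι ι ℝ →ₗ[ℝ] ℝ :=
    { toFun := fun M => ∑ i, ∑ j, w i j * M i j
      map_add' := fun M N => by simp [mul_add, Finset.sum_add_distrib]
      map_smul' := fun a M => by simp [Finset.mul_sum, mul_left_comm] }
  rw [← SetLike.mem_coe, doublyStochastic_eq_convexHull_permMatrix] at hD
  obtain ⟨_, ⟨τ, rfl⟩, hτ⟩ := (φ.convexOn convex_univ).exists_ge_of_mem_convexHull
    (Set.subset_univ _) hD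
  refine ⟨τ, hτ.trans_eq ?_⟩
  simp [φ, Equiv.Perm.permMatrix, PEquiv.toMatrix_apply, Equiv.toPEquiv_apply]

theorem IsDoublySubstochastic.exists_perm_sum_mul_le [DecidableEq ι] {M w : Matrix ι ι ℝ}
    (hM : IsDoublySubstochastic M) (hw : ∀ i j, 0 ≤ w i j) : ∃ τ : Equiv.Perm ι, ∑ i, ∑ j, w i j * M i j ≤ ∑ i, w i (τ i) := by
  obtain ⟨D, hD, hMD⟩ := hM.exists_mem_doublyStochastic_le
  obtain ⟨τ, hτ⟩ := exists_perm_sum_mul_le_of_mem_doublyStochastic w hD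
  refine ⟨τ, le_trans ?_ hτ⟩
  gcongr with i _ j _
  · exact hw i j
  · exact hMD i j

end Substochastic

theorem IsOrth.mul_transpose {k : ℕ} {R : Matrix (Fin k) (Fin k) ℝ} (hR : IsOrth R) : R * Rᵀ = 1 :=
  mul_eq_one_comm.mp hR

theorem IsOrth.transpose_mul {k : ℕ} {R₁ R₂ : Matrix (Fin k) (Fin k) ℝ} (h₁ : IsOrth R₁)
    (h₂ : IsOrth R₂) : IsOrth (R₁ᵀ * R₂) := by
  rw [IsOrth, Matrix.transpose_mul, transpose_transpose, Matrix.mul_assoc, ← Matrix.mul_assoc R₁,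
    h₁.mul_transpose, Matrix.one_mul, h₂]

theorem IsOrth.isDoublySubstochastic_hadamard_self {k : ℕ} {R : Matrix (Fin k) (Fin k) ℝ}
    (hR : IsOrth R) : IsDoublySubstochastic (R ⊙ R) := by
  refine ⟨fun i j => mul_self_nonneg _, fun i => le_of_eq ?_, fun j => le_of_eq ?_⟩
  · simpa [mul_apply] using congrFun₂ hR.mul_transpose i i
  · simpa [mul_apply] using congrFun₂ hR j j

theorem mdot_eq_trace {m n : ℕ} (A B : Matrix (Fin m) (Fin n) ℝ) : mdot A B = trace (Aᵀ * B) := by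
  simp only [mdot, trace, Matrix.diag, mul_apply, transpose_apply]
  exact Finset.sum_comm

theorem mdot_mul_mul_transpose {m n : ℕ} (R₁ R₂ : Matrix (Fin m) (Fin m) ℝ)
    (P₁ P₂ : Matrix (Fin n) (Fin n) ℝ) (A B : Matrix (Fin m) (Fin n) ℝ) :
    mdot (R₁ * A * P₁ᵀ) (R₂ * B * P₂ᵀ) = mdot A (R₁ᵀ * R₂ * B * (P₁ᵀ * P₂)ᵀ) := by
  simp only [mdot_eq_trace, transpose_mul, transpose_transpose, Matrix.mul_assoc]
  rw [trace_mul_comm]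
  simp only [Matrix.mul_assoc]

theorem mdot_sub_sub {m n : ℕ} (A₁ A₂ B₁ B₂ : Matrix (Fin m) (Fin n) ℝ) :
    mdot (A₁ - A₂) (B₁ - B₂) = mdot A₁ B₁ + mdot A₂ B₂ - (mdot A₁ B₂ + mdot B₁ A₂) := by
  simp only [mdot, Matrix.sub_apply, ← Finset.sum_add_distrib, ← Finset.sum_sub_distrib]
  exact Finset.sum_congr rfl fun i _ => Finset.sum_congr rfl fun j _ => by ring

theorem rdg_apply_of_le {m n : ℕ} (hmn : m ≤ n) (x : Fin m → ℝ) (i : Fin m) (j : Fin n) :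
    rdg m n x i j = if Fin.castLE hmn i = j then x i else 0 := by
  by_cases h : Fin.castLE hmn i = j
  · subst h
    simp [rdg]
  · have hij : (i : ℕ) ≠ j := fun h' => h (Fin.ext h')
    simp [rdg, hij, h]

theorem mul_rdg_mul_transpose_apply {m n : ℕ} (hmn : m ≤ n) (R : Matrix (Fin m) (Fin m) ℝ)
    (x : Fin m → ℝ) (P : Matrix (Fin n) (Fin n) ℝ) (k : Fin m) (l : Fin n) :
    (R * rdg m n x * Pᵀ) k l = ∑ i, R k i * x i * P l (Fin.castLE hmn i) := by
  simp only [mul_apply, rdg_apply_of_le hmn, transpose_apply, mul_ite, mul_zero, Finset.sum_mul,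
    ite_mul, zero_mul]
  rw [Finset.sum_comm]
  simp

theorem mdot_rdg_left {m n : ℕ} (hmn : m ≤ n) (x : Fin m → ℝ) (M : Matrix (Fin m) (Fin n) ℝ) :
    mdot (rdg m n x) M = ∑ i, x i * M i (Fin.castLE hmn i) := by
  simp [mdot, rdg_apply_of_le hmn, ite_mul]

theorem mdot_mul_rdg_mul_transpose {m n : ℕ} (hmn : m ≤ n) (R₁ R₂ : Matrix (Fin m) (Fin m) ℝ)
    (P₁ P₂ : Matrix (Fin n) (Fin n) ℝ) (x y : Fin m → ℝ) :
    mdot (R₁ * rdg m n x * P₁ᵀ) (R₂ * rdg m n y * P₂ᵀ) =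
      ∑ i, ∑ j,
        x i * y j * ((R₁ᵀ * R₂) i j * (P₁ᵀ * P₂) (Fin.castLE hmn i) (Fin.castLE hmn j)) := by
  simp only [mdot_mul_mul_transpose, mdot_rdg_left hmn, mul_rdg_mul_transpose_apply hmn,
    Finset.mul_sum]
  refine Finset.sum_congr rfl fun i _ => Finset.sum_congr rfl fun j _ => ?_
  ring

theorem mdot_mul_rdg_mul_transpose_self {m n : ℕ} (hmn : m ≤ n) {R : Matrix (Fin m) (Fin m) ℝ}
    {P : Matrix (Fin n) (Fin n) ℝ} (hR : IsOrth R) (hP : IsOrth P) (x y : Fin m → ℝ) :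
    mdot (R * rdg m n x * Pᵀ) (R * rdg m n y * Pᵀ) = ∑ i, x i * y i := by
  rw [mdot_mul_rdg_mul_transpose hmn, hR, hP]
  simp [one_apply]

theorem smul_sub_eq_mul_rdg_mul_transpose {m n : ℕ} {R : Matrix (Fin m) (Fin m) ℝ}
    {P : Matrix (Fin n) (Fin n) ℝ} {X Γ : Matrix (Fin m) (Fin n) ℝ} {s d : Fin m → ℝ}
    (hX : X = R * rdg m n s * Pᵀ) (hΓ : Γ = -(R * rdg m n d * Pᵀ)) (c : ℝ) :
    c • X - Γ = R * rdg m n (fun i => c * s i + d i) * Pᵀ := by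
  have hrdg : rdg m n (fun i => c * s i + d i) = c • rdg m n s + rdg m n d := by
    ext i j
    by_cases hij : (i : ℕ) = j <;> simp [rdg, hij]
  rw [hX, hΓ, hrdg, Matrix.mul_add, Matrix.add_mul, Matrix.mul_smul, Matrix.smul_mul,
    sub_neg_eq_add]

theorem exists_perm_mdot_add_mdot_le {m n : ℕ} (hmn : m ≤ n) {R₁ R₂ : Matrix (Fin m) (Fin m) ℝ}
    {P₁ P₂ : Matrix (Fin n) (Fin n) ℝ} (hR₁ : IsOrth R₁) (hR₂ : IsOrth R₂) (hP₁ : IsOrth P₁)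
    (hP₂ : IsOrth P₂) {a b c e : Fin m → ℝ} (ha : ∀ i, 0 ≤ a i) (hb : ∀ i, 0 ≤ b i)
    (hc : ∀ i, 0 ≤ c i) (he : ∀ i, 0 ≤ e i) :
    ∃ τ : Equiv.Perm (Fin m),
      mdot (R₁ * rdg m n a * P₁ᵀ) (R₂ * rdg m n e * P₂ᵀ) +
          mdot (R₁ * rdg m n b * P₁ᵀ) (R₂ * rdg m n c * P₂ᵀ) ≤
        ∑ i, (a i * e (τ i) + b i * c (τ i)) := by
  set Q := R₁ᵀ * R₂
  set S := (P₁ᵀ * P₂).submatrix (Fin.castLE hmn) (Fin.castLE hmn)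
  have hN : IsDoublySubstochastic ((Q ⊙ S).map abs) :=
    (hR₁.transpose_mul hR₂).isDoublySubstochastic_hadamard_self.abs_hadamard
      ((hP₁.transpose_mul hP₂).isDoublySubstochastic_hadamard_self.submatrix (Fin.castLEEmb hmn))
  obtain ⟨τ, hτ⟩ := hN.exists_perm_sum_mul_le (w := fun i j => a i * e j + b i * c j)
    fun i j => add_nonneg (mul_nonneg (ha i) (he j)) (mul_nonneg (hb i) (hc j))
  refine ⟨τ, ?_⟩
  calc _ = ∑ i, ∑ j, (a i * e j + b i * c j) * (Q ⊙ S) i j := by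
        rw [mdot_mul_rdg_mul_transpose hmn, mdot_mul_rdg_mul_transpose hmn,
          ← Finset.sum_add_distrib]
        exact Finset.sum_congr rfl fun i _ => by
          rw [← Finset.sum_add_distrib]
          refine Finset.sum_congr rfl fun j _ => ?_
          simp only [hadamard_apply, S, submatrix_apply]
          ring
    _ ≤ ∑ i, ∑ j, (a i * e j + b i * c j) * (Q ⊙ S).map abs i j := by
        gcongr with i _ j _
        · exact add_nonneg (mul_nonneg (ha i) (he j)) (mul_nonneg (hb i) (hc j))
        · exact le_abs_self _
    _ ≤ _ := hτ

theorem sigRow_nonneg {a b : ℕ} (X : Matrix (Fin a) (Fin b) ℝ) (i : Fin a) : 0 ≤ sigRow X i :=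
  Real.sqrt_nonneg _

theorem pseudo_stationary_singular_value_inequality_general (m n : ℕ) (hmn : m ≤ n)
    (mu L : ℝ) (hmu : 0 < mu) (hL : mu ≤ L)
    (h : Matrix (Fin m) (Fin n) ℝ → ℝ)
    (G : Matrix (Fin m) (Fin n) ℝ → Matrix (Fin m) (Fin n) ℝ)
    (hgrad : ∀ X, HasFDerivAt h (toDual (G X)) X)
    (hsc : ConvexOn ℝ Set.univ fun X => h X - mu / 2 * mdot X X)
    (hlip : ∀ X Y, frob (G X - G Y) ≤ L * frob (X - Y))
    (X1 X2 : Matrix (Fin m) (Fin n) ℝ)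
    (R1 R2 : Matrix (Fin m) (Fin m) ℝ) (P1 P2 : Matrix (Fin n) (Fin n) ℝ)
    (d1 d2 : Fin m → ℝ)
    (hR1 : IsOrth R1) (hP1 : IsOrth P1) (hR2 : IsOrth R2) (hP2 : IsOrth P2)
    (hX1 : X1 = R1 * rdg m n (sigRow X1) * P1ᵀ)
    (hG1 : G X1 = -(R1 * rdg m n d1 * P1ᵀ))
    (hd1pos : ∀ i, 0 ≤ d1 i)
    (hX2 : X2 = R2 * rdg m n (sigRow X2) * P2ᵀ)
    (hG2 : G X2 = -(R2 * rdg m n d2 * P2ᵀ))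
    (hd2pos : ∀ i, 0 ≤ d2 i) :
    ∃ τ : Equiv.Perm (Fin m),
      0 ≤ (∑ i, (L * sigRow X1 i + d1 i) * (mu * sigRow X2 (τ i) + d2 (τ i)))
        + (∑ i, (mu * sigRow X1 i + d1 i) * (L * sigRow X2 (τ i) + d2 (τ i)))
        - (∑ i, (mu * sigRow X1 i + d1 i) * (L * sigRow X1 i + d1 i))
        - (∑ i, (mu * sigRow X2 i + d2 i) * (L * sigRow X2 i + d2 i)) := by
  have hweight : ∀ (X : Matrix (Fin m) (Fin n) ℝ) {c : ℝ} {d : Fin m → ℝ}, 0 ≤ c →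
      (∀ i, 0 ≤ d i) → ∀ i, 0 ≤ c * sigRow X i + d i := fun X _ _ hc hd i =>
    add_nonneg (mul_nonneg hc (sigRow_nonneg X i)) (hd i)
  obtain ⟨τ, hτ⟩ := exists_perm_mdot_add_mdot_le hmn hR1 hR2 hP1 hP2
    (hweight X1 hmu.le hd1pos) (hweight X1 (hmu.le.trans hL) hd1pos)
    (hweight X2 hmu.le hd2pos) (hweight X2 (hmu.le.trans hL) hd2pos)
  have hdiff : ∀ c : ℝ, c • (X1 - X2) - (G X1 - G X2) =
      R1 * rdg m n (fun i => c * sigRow X1 i + d1 i) * P1ᵀ -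
        R2 * rdg m n (fun i => c * sigRow X2 i + d2 i) * P2ᵀ := fun c => by
    rw [← smul_sub_eq_mul_rdg_mul_transpose hX1 hG1, ← smul_sub_eq_mul_rdg_mul_transpose hX2 hG2]
    module
  have hkey := mdot_gradient_coercivity hL hgrad hsc hlip X1 X2
  rw [hdiff, hdiff, mdot_sub_sub, mdot_mul_rdg_mul_transpose_self hmn hR1 hP1,
    mdot_mul_rdg_mul_transpose_self hmn hR2 hP2] at hkey
  refine ⟨τ, ?_⟩
  rw [Finset.sum_add_distrib] at hτ
  linarith

theorem pseudo_stationary_singular_value_inequality (m n : ℕ) (hmn : m ≤ n)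
    (mu L lam : ℝ) (hmu : 0 < mu) (hL : mu ≤ L) (hlam : 0 < lam)
    (h : Matrix (Fin m) (Fin n) ℝ → ℝ)
    (G : Matrix (Fin m) (Fin n) ℝ → Matrix (Fin m) (Fin n) ℝ)
    (hC1 : ContDiff ℝ 1 h)
    (hgrad : ∀ X, HasFDerivAt h (toDual (G X)) X)
    (hsc : ConvexOn ℝ Set.univ fun X => h X - mu / 2 * mdot X X)
    (hlip : ∀ X Y, frob (G X - G Y) ≤ L * frob (X - Y))
    (X1 X2 : Matrix (Fin m) (Fin n) ℝ)
    (R1 R2 : Matrix (Fin m) (Fin m) ℝ) (P1 P2 : Matrix (Fin n) (Fin n) ℝ)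
    (d1 d2 : Fin m → ℝ)
    (hR1 : IsOrth R1) (hP1 : IsOrth P1) (hR2 : IsOrth R2) (hP2 : IsOrth P2)
    (hX1 : X1 = R1 * rdg m n (sigRow X1) * P1ᵀ)
    (hG1 : G X1 = -(R1 * rdg m n d1 * P1ᵀ))
    (hd1pos : ∀ i, 0 ≤ d1 i)
    (hd1lam : ∀ i : Fin m, (i : ℕ) < X1.rank → d1 i = lam)
    (hX2 : X2 = R2 * rdg m n (sigRow X2) * P2ᵀ)
    (hG2 : G X2 = -(R2 * rdg m n d2 * P2ᵀ))
    (hd2pos : ∀ i, 0 ≤ d2 i)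
    (hd2lam : ∀ i : Fin m, (i : ℕ) < X2.rank → d2 i = lam) :
    ∃ τ : Equiv.Perm (Fin m),
      0 ≤ (∑ i, (L * sigRow X1 i + d1 i) * (mu * sigRow X2 (τ i) + d2 (τ i)))
        + (∑ i, (mu * sigRow X1 i + d1 i) * (L * sigRow X2 (τ i) + d2 (τ i)))
        - (∑ i, (mu * sigRow X1 i + d1 i) * (L * sigRow X1 i + d1 i))
        - (∑ i, (mu * sigRow X2 i + d2 i) * (L * sigRow X2 i + d2 i)) :=
  pseudo_stationary_singular_value_inequality_general m n hmn mu L hmu hL h G hgrad hsc hlip X1 X2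
    R1 R2 P1 P2 d1 d2 hR1 hP1 hR2 hP2 hX1 hG1 hd1pos hX2 hG2 hd2pos
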